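/- Let z ∈ ℂ with Re(2(4z+1)) < 0; write −x + iy = 2(4z+1) with x > 0. If a nonzero sequence (g_n) of complex numbers satisfies the recursion (n+2)g_{n+2} = ρ_n · (n g_n) with ρ_n = (z + (1/4)(1+1/n))/(z + (1/4)(1−1/(n+2))), then |n g_n| = O(n^{−2x/(x²+y²)}) as n → ∞. -/

import Mathlib

open Filter Asymptotics

private lemma log_core (α V : ℝ) (hα : 0 < α) (hVα : α^2 ≤ V)
    (t : ℝ) (ht2 : 2 ≤ t) (htα : α + 1 ≤ t) :
    Real.log (t^2 - 2*α*t + V) / 2 - Real.log ((t+2)^2 + 2*α*(t+2) + V) / 2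
      + (1+α) * (Real.log (t+2) - Real.log t)
      ≤ (α + α^2 + (α+1)*V/2) * (1/t - 1/(t+2)) := by
  have hV0 : 0 ≤ V := le_trans (sq_nonneg α) hVα
  have ht0 : 0 < t := lt_of_lt_of_le (by norm_num) ht2
  have ht20 : (0:ℝ) < t + 2 := by linarith
  set p := t^2 - 2*α*t + V with hp_def
  set q := (t+2)^2 + 2*α*(t+2) + V with hq_def
  have hp1 : 1 ≤ p := by nlinarith [sq_nonneg (t - α - 1)]
  have hp0 : 0 < p := by linarith
  have hq2 : (t+2)^2 ≤ q := by nlinarith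
  have hq0 : 0 < q := by nlinarith
  have hA : Real.log p / 2 ≤ Real.log t + (V/(2*t^2) - α/t) := by
    have h := Real.log_le_sub_one_of_pos (show 0 < p / t^2 by positivity)
    rw [Real.log_div (by positivity) (by positivity)] at h
    have e1 : Real.log (t^2) = 2 * Real.log t := by
      rw [sq, Real.log_mul (by positivity) (by positivity)]; ring
    have e2 : p / t^2 - 1 = 2*(V/(2*t^2) - α/t) := by field_simp; ring
    linarith
  have hB : Real.log (t+2) + (α*(t+2)/q + V/(2*q)) ≤ Real.log q / 2 := by
    have h := Real.log_le_sub_one_of_pos (show 0 < (t+2)^2 / q by positivity)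
    rw [Real.log_div (by positivity) (by positivity)] at h
    have e1 : Real.log ((t+2)^2) = 2 * Real.log (t+2) := by
      rw [sq, Real.log_mul (by positivity) (by positivity)]; ring
    have e2 : (t+2)^2 / q - 1 = -(2*(α*(t+2)/q + V/(2*q))) := by field_simp; ring
    linarith
  have hC : α * (Real.log (t+2) - Real.log t) ≤ α/t + α/t := by
    have h := Real.log_le_sub_one_of_pos (show 0 < (t+2) / t by positivity)
    rw [Real.log_div (by positivity) (by positivity)] at h
    have e2 : (t+2)/t - 1 = 2/t := by field_simp; ring
    have h2 : Real.log (t+2) - Real.log t ≤ 2/t := by linarith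
    calc α * (Real.log (t+2) - Real.log t) ≤ α * (2/t) :=
          mul_le_mul_of_nonneg_left h2 hα.le
      _ = α/t + α/t := by ring
  have hchain : α/t - α*(t+2)/q + V/(2*t^2) ≤ (α + α^2 + (α+1)*V/2) * (1/t - 1/(t+2)) := by
    have e1 : α/t - α*(t+2)/q = α*((2+2*α)*(t+2)+V)/(t*q) := by
      field_simp; ring
    have e2 : α*((2+2*α)*(t+2)+V)/(t*q) ≤ α*((2+2*α)*(t+2)+V*(t+2))/(t*(t+2)^2) := by
      apply div_le_div₀ (by positivity)
        (by nlinarith [mul_nonneg (mul_nonneg hα.le hV0) (show (0:ℝ) ≤ t+1 by linarith)])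
        (by positivity) (by nlinarith)
    have e3 : α*((2+2*α)*(t+2)+V*(t+2))/(t*(t+2)^2) = (α*(2+2*α)+α*V)/(t*(t+2)) := by
      field_simp
    have e4 : V/(2*t^2) ≤ V/(t*(t+2)) :=
      div_le_div_of_nonneg_left hV0 (by positivity) (by nlinarith)
    have e5 : (α*(2+2*α)+α*V)/(t*(t+2)) + V/(t*(t+2)) = (α + α^2 + (α+1)*V/2) * (1/t - 1/(t+2)) := by
      field_simp; ring
    linarith [e1, e2, e3, e4, e5]
  have hVq : 0 ≤ V/(2*q) := by positivity
  linarith [hA, hB, hC, hchain, hVq]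

private lemma step_norm (α V K : ℝ) (hα : 0 < α) (hVα : α^2 ≤ V)
    (hK : K = α + α^2 + (α+1)*V/2)
    (t : ℝ) (ht2 : 2 ≤ t) (htα : α + 1 ≤ t) :
    (Real.sqrt (t^2 - 2*α*t + V) * (t+2)) / (Real.sqrt ((t+2)^2 + 2*α*(t+2) + V) * t)
      * ((t+2) ^ α * Real.exp (K/(t+2))) ≤ t ^ α * Real.exp (K/t) := by
  have hV0 : 0 ≤ V := le_trans (sq_nonneg α) hVα
  have ht0 : 0 < t := lt_of_lt_of_le (by norm_num) ht2
  have ht20 : (0:ℝ) < t + 2 := by linarith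
  have hp1 : (1:ℝ) ≤ t^2 - 2*α*t + V := by nlinarith [sq_nonneg (t - α - 1)]
  have hp0 : (0:ℝ) < t^2 - 2*α*t + V := by linarith
  have hq0 : (0:ℝ) < (t+2)^2 + 2*α*(t+2) + V := by nlinarith
  have hsp : 0 < Real.sqrt (t^2 - 2*α*t + V) := Real.sqrt_pos.mpr hp0
  have hsq : 0 < Real.sqrt ((t+2)^2 + 2*α*(t+2) + V) := Real.sqrt_pos.mpr hq0
  have hL : 0 < (Real.sqrt (t^2 - 2*α*t + V) * (t+2)) /
      (Real.sqrt ((t+2)^2 + 2*α*(t+2) + V) * t) * ((t+2) ^ α * Real.exp (K/(t+2))) := by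
    positivity
  have hR : 0 < t ^ α * Real.exp (K/t) := by positivity
  rw [← Real.log_le_log_iff hL hR,
    Real.log_mul (by positivity) (by positivity),
    Real.log_div (by positivity) (by positivity),
    Real.log_mul (by positivity) (by positivity),
    Real.log_mul (by positivity) (by positivity),
    Real.log_mul (by positivity) (by positivity),
    Real.log_mul (by positivity) (by positivity),
    Real.log_sqrt hp0.le, Real.log_sqrt hq0.le,
    Real.log_rpow ht20, Real.log_rpow ht0, Real.log_exp, Real.log_exp]
  have hcore := log_core α V hα hVα t ht2 htα
  have e : (α + α^2 + (α+1)*V/2) * (1/t - 1/(t+2)) = K/t - K/(t+2) := by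
    rw [hK]; ring
  rw [e] at hcore
  linarith

theorem coefficient_decay (z : ℂ) (x y : ℝ) (hx : 0 < x)
    (hxy : (-x : ℂ) + y * Complex.I = 2 * (4 * z + 1))
    (g : ℕ → ℂ) (hne : ∃ n, g n ≠ 0)
    (hrec : ∀ n : ℕ, 1 ≤ n →
      ((n : ℂ) + 2) * g (n + 2)
        = ((z + (1 / 4) * (1 + 1 / (n : ℂ))) / (z + (1 / 4) * (1 - 1 / ((n : ℂ) + 2))))
            * ((n : ℂ) * g n)) :
    (fun n : ℕ => ‖(n : ℂ) * g n‖) =O[atTop]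
      (fun n : ℕ => (n : ℝ) ^ (-(2 * x / (x ^ 2 + y ^ 2)))) := by
  have hxy2 : 0 < x^2 + y^2 := by positivity
  set α := 2 * x / (x ^ 2 + y ^ 2) with hα_def
  have hα : 0 < α := by positivity
  set u : ℂ := 4 * z + 1 with hu_def
  rw [Complex.ext_iff] at hxy
  obtain ⟨h1, h2⟩ := hxy
  simp [Complex.mul_re, Complex.mul_im] at h1 h2
  have hure : u.re = -x/2 := by linarith
  have huim : u.im = y/2 := by linarith
  have hu0 : u ≠ 0 := by
    intro h; rw [h] at hure; simp at hure; linarith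
  set v : ℂ := u⁻¹ with hv_def
  have hnsq : Complex.normSq u = (x^2+y^2)/4 := by
    rw [Complex.normSq_apply, hure, huim]; ring
  have hvre : v.re = -α := by
    rw [hv_def, Complex.inv_re, hure, hnsq, hα_def]
    field_simp
    ring
  set V := Complex.normSq v with hV_def
  have hVα : α^2 ≤ V := by
    rw [hV_def, Complex.normSq_apply, hvre]
    nlinarith [sq_nonneg v.im]
  have hV0 : 0 ≤ V := le_trans (sq_nonneg α) hVα
  set K := α + α^2 + (α+1)*V/2 with hK_def
  have hK0 : 0 ≤ K := by rw [hK_def]; positivity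
  set N : ℕ := ⌈α⌉₊ + 2 with hN_def
  have hN2 : (2:ℝ) ≤ (N:ℝ) := by
    rw [hN_def]; push_cast
    have : (0:ℝ) ≤ (⌈α⌉₊:ℝ) := Nat.cast_nonneg _
    linarith
  have hNα : α + 1 ≤ (N:ℝ) := by
    have := Nat.le_ceil α
    rw [hN_def]; push_cast; linarith
  -- norm of each step
  have hnorm : ∀ n : ℕ, N ≤ n →
      ‖(((n+2):ℕ):ℂ) * g (n+2)‖
        = (Real.sqrt ((n:ℝ)^2 - 2*α*(n:ℝ) + V) * ((n:ℝ)+2))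
            / (Real.sqrt (((n:ℝ)+2)^2 + 2*α*((n:ℝ)+2) + V) * (n:ℝ))
          * ‖(n:ℂ) * g n‖ := by
    intro n hn
    have hnR : α + 1 ≤ (n:ℝ) := le_trans hNα (Nat.cast_le.mpr hn)
    have hn1 : 1 ≤ n := by
      have : (1:ℝ) ≤ (n:ℝ) := by linarith
      exact_mod_cast this
    have hn0 : (n:ℂ) ≠ 0 := Nat.cast_ne_zero.mpr (by omega)
    have hn2c : ((n:ℂ) + 2) ≠ 0 := by
      have : ((n+2:ℕ):ℂ) ≠ 0 := Nat.cast_ne_zero.mpr (by omega)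
      push_cast at this; exact this
    have h2v : ((n:ℂ) + 2) - v ≠ 0 := by
      intro h
      have := congrArg Complex.re h
      simp [Complex.sub_re, Complex.add_re, hvre] at this
      have hnn : (0:ℝ) ≤ (n:ℝ) := Nat.cast_nonneg n
      linarith
    have hcoef : (z + (1 / 4) * (1 + 1 / (n : ℂ))) / (z + (1 / 4) * (1 - 1 / ((n : ℂ) + 2)))
        = (((n:ℂ) + v) * ((n:ℂ) + 2)) / ((((n:ℂ) + 2) - v) * (n:ℂ)) := by
      have hz : z = (u - 1)/4 := by rw [hu_def]; ring
      have hnum : z + (1 / 4) * (1 + 1 / (n : ℂ)) = u * ((n:ℂ) + v) / (4 * (n:ℂ)) := by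
        rw [hz, hv_def]; field_simp; ring
      have hden : z + (1 / 4) * (1 - 1 / ((n : ℂ) + 2))
          = u * (((n:ℂ)+2) - v) / (4 * ((n:ℂ)+2)) := by
        rw [hz, hv_def]; field_simp; ring
      rw [hnum, hden]
      field_simp [hu0, hn0, hn2c, h2v]
    have hstep := hrec n hn1
    rw [hcoef] at hstep
    have hcast : (((n+2):ℕ):ℂ) = (n:ℂ) + 2 := by push_cast; ring
    rw [hcast, hstep, norm_mul, norm_div, norm_mul, norm_mul]
    have hnp : ‖(n:ℂ) + v‖ = Real.sqrt ((n:ℝ)^2 - 2*α*(n:ℝ) + V) := by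
      rw [Complex.norm_def]
      congr 1
      rw [Complex.normSq_apply]
      simp [Complex.add_re, Complex.add_im, hvre]
      rw [hV_def, Complex.normSq_apply, hvre]
      ring
    have hnq : ‖((n:ℂ) + 2) - v‖ = Real.sqrt (((n:ℝ)+2)^2 + 2*α*((n:ℝ)+2) + V) := by
      rw [Complex.norm_def]
      congr 1
      rw [Complex.normSq_apply]
      simp [Complex.sub_re, Complex.sub_im, Complex.add_re, Complex.add_im, hvre]
      rw [hV_def, Complex.normSq_apply, hvre]
      ring
    have hn2n : ‖(n:ℂ) + 2‖ = (n:ℝ) + 2 := by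
      rw [← hcast, Complex.norm_natCast]; push_cast; ring
    have hnn : ‖(n:ℂ)‖ = (n:ℝ) := Complex.norm_natCast n
    rw [hnp, hnq, hn2n, hnn]
  -- the key induction
  have key : ∀ m : ℕ, N ≤ m → ∀ j : ℕ,
      ‖((m + 2*j : ℕ):ℂ) * g (m + 2*j)‖ * ((m + 2*j : ℕ):ℝ) ^ α
          * Real.exp (K / ((m + 2*j : ℕ):ℝ))
        ≤ ‖(m:ℂ) * g m‖ * (m:ℝ) ^ α * Real.exp (K / (m:ℝ)) := by
    intro m hm j
    induction j with
    | zero => simp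
    | succ j ih =>
      have hn : N ≤ m + 2*j := le_trans hm (Nat.le_add_right _ _)
      have hidx : m + 2*(j+1) = (m + 2*j) + 2 := by ring
      rw [hidx]
      set n := m + 2*j with hn_def
      have hnR2 : (2:ℝ) ≤ (n:ℝ) := le_trans hN2 (Nat.cast_le.mpr hn)
      have hnRα : α + 1 ≤ (n:ℝ) := le_trans hNα (Nat.cast_le.mpr hn)
      have hc2 : ((n + 2 : ℕ):ℝ) = (n:ℝ) + 2 := by push_cast; ring
      calc ‖((n+2:ℕ):ℂ) * g (n+2)‖ * ((n+2:ℕ):ℝ) ^ α * Real.exp (K / ((n+2:ℕ):ℝ))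
          = ‖(n:ℂ) * g n‖ *
              ((Real.sqrt ((n:ℝ)^2 - 2*α*(n:ℝ) + V) * ((n:ℝ)+2))
                / (Real.sqrt (((n:ℝ)+2)^2 + 2*α*((n:ℝ)+2) + V) * (n:ℝ))
              * (((n:ℝ)+2) ^ α * Real.exp (K/((n:ℝ)+2)))) := by
            rw [hnorm n hn, hc2]; ring
        _ ≤ ‖(n:ℂ) * g n‖ * ((n:ℝ) ^ α * Real.exp (K/(n:ℝ))) := by
            exact mul_le_mul_of_nonneg_left
              (step_norm α V K hα hVα hK_def (n:ℝ) hnR2 hnRα) (norm_nonneg _)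
        _ = ‖(n:ℂ) * g n‖ * (n:ℝ) ^ α * Real.exp (K/(n:ℝ)) := by ring
        _ ≤ _ := ih
  -- assemble the bound
  set C : ℝ := max (‖(N:ℂ) * g N‖ * (N:ℝ) ^ α * Real.exp (K / (N:ℝ)))
      (‖((N+1:ℕ):ℂ) * g (N+1)‖ * ((N+1:ℕ):ℝ) ^ α * Real.exp (K / ((N+1:ℕ):ℝ))) with hC_def
  rw [isBigO_iff]
  refine ⟨C, ?_⟩
  filter_upwards [eventually_ge_atTop N] with n hn
  have hnR2 : (2:ℝ) ≤ (n:ℝ) := le_trans hN2 (Nat.cast_le.mpr hn)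
  have hn0R : (0:ℝ) < (n:ℝ) := by linarith
  have hkey : ‖(n:ℂ) * g n‖ * (n:ℝ) ^ α * Real.exp (K / (n:ℝ)) ≤ C := by
    obtain ⟨j, hj⟩ : ∃ j, n = N + 2*j ∨ n = (N+1) + 2*j := ⟨(n-N)/2, by omega⟩
    rcases hj with h | h
    · calc ‖(n:ℂ) * g n‖ * (n:ℝ) ^ α * Real.exp (K / (n:ℝ))
          = ‖((N + 2*j : ℕ):ℂ) * g (N + 2*j)‖ * ((N + 2*j : ℕ):ℝ) ^ α
              * Real.exp (K / ((N + 2*j : ℕ):ℝ)) := by rw [← h]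
        _ ≤ _ := key N le_rfl j
        _ ≤ C := le_max_left _ _
    · calc ‖(n:ℂ) * g n‖ * (n:ℝ) ^ α * Real.exp (K / (n:ℝ))
          = ‖(((N+1) + 2*j : ℕ):ℂ) * g ((N+1) + 2*j)‖ * (((N+1) + 2*j : ℕ):ℝ) ^ α
              * Real.exp (K / (((N+1) + 2*j : ℕ):ℝ)) := by rw [← h]
        _ ≤ _ := key (N+1) (Nat.le_succ N) j
        _ ≤ C := le_max_right _ _
  have hone : 1 ≤ Real.exp (K / (n:ℝ)) := Real.one_le_exp (by positivity)
  have h1 : ‖(n:ℂ) * g n‖ * (n:ℝ) ^ α ≤ C :=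
    le_trans (le_mul_of_one_le_right (by positivity) hone) hkey
  have hrp : (0:ℝ) < (n:ℝ) ^ α := Real.rpow_pos_of_pos hn0R α
  have h2 : ‖(n:ℂ) * g n‖ ≤ C * (n:ℝ) ^ (-α) := by
    rw [Real.rpow_neg hn0R.le, ← div_eq_mul_inv]
    exact (le_div_iff₀ hrp).mpr h1
  calc ‖‖(n:ℂ) * g n‖‖ = ‖(n:ℂ) * g n‖ := norm_norm _
    _ ≤ C * (n:ℝ) ^ (-α) := h2
    _ = C * ‖(n:ℝ) ^ (-α)‖ := by
        rw [Real.norm_of_nonneg (Real.rpow_nonneg hn0R.le _)]
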